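/- For every r > 0, the space (U_r, d) of uniformly discrete subsets of ℝⁿ with parameter r is a compact metric space. -/

import Mathlib

/-!
Fix a basepoint. For each radius `m`, the truncations `u k ∩ closedBall x₀ m` lie in the set of
closed subsets of a compact ball, which is compact for the Hausdorff distance (Blaschke selection);
a single subsequence along which all truncations converge is extracted from the compact product
over `m`. The union `S` of the limits `L m` is the limit for `d`: its points of norm `ρ < m` already
lie in `L m`. Finally, a `d`-limit of `r`-uniformly discrete sets is `r`-uniformly discrete, since
two distinct points of the limit are shadowed by two distinct points of the approximating sets.
-/

open Metric Set Pointwise Filter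

/-- The set `D(S,S')` of scales `a > 0` at which `S` and `S'` agree up to `a`. -/
def DSet {n : ℕ} (S S' : Set (EuclideanSpace ℝ (Fin n))) : Set ℝ :=
  {a : ℝ | 0 < a ∧ S ∩ closedBall (0 : EuclideanSpace ℝ (Fin n)) a⁻¹ ⊆ S' + closedBall (0 : EuclideanSpace ℝ (Fin n)) a ∧
    S' ∩ closedBall (0 : EuclideanSpace ℝ (Fin n)) a⁻¹ ⊆ S + closedBall (0 : EuclideanSpace ℝ (Fin n)) a}

/-- `d(S,S') = min (1/√2, inf D(S,S'))`. -/
noncomputable def dLF {n : ℕ} (S S' : Set (EuclideanSpace ℝ (Fin n))) : ℝ :=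
  sInf (insert (Real.sqrt 2)⁻¹ (DSet S S'))

/-- `S` is uniformly discrete with parameter `r`: two distinct points of `S`
are at distance at least `r`. -/
def UniformlyDiscreteSet {n : ℕ} (r : ℝ) (S : Set (EuclideanSpace ℝ (Fin n))) : Prop :=
  ∀ x ∈ S, ∀ y ∈ S, x ≠ y → r ≤ dist x y

open Topology TopologicalSpace

section HausdorffSelection

variable {X : Type*} [MetricSpace X]

theorem eventually_subset_thickening_of_tendsto_hausdorffEDist {ι : Type*} {l : Filter ι}
    {s : ι → Set X} {t : Set X} (h : Tendsto (fun k => hausdorffEDist (s k) t) l (𝓝 0))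
    {ε : ℝ} (hε : 0 < ε) : ∀ᶠ k in l, s k ⊆ thickening ε t ∧ t ⊆ thickening ε (s k) := by
  filter_upwards [h.eventually_lt_const (ENNReal.ofReal_pos.2 hε)] with k hk
  refine ⟨fun x hx => ?_, fun x hx => ?_⟩ <;> rw [mem_thickening_iff_infEDist_lt]
  · exact (infEDist_le_hausdorffEDist_of_mem hx).trans_lt hk
  · exact ((infEDist_le_hausdorffEDist_of_mem hx).trans_eq hausdorffEDist_comm).trans_lt hk

theorem exists_subseq_tendsto_hausdorffEDist_inter_closedBall [ProperSpace X] (x₀ : X)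
    (u : ℕ → Set X) : ∃ (L : ℕ → Set X) (φ : ℕ → ℕ), StrictMono φ ∧ (∀ m, IsClosed (L m)) ∧
      ∀ m : ℕ, Tendsto (fun k => hausdorffEDist (u (φ k) ∩ closedBall x₀ m) (L m)) atTop (𝓝 0) := by
  let C : ℕ → ℕ → Closeds X := fun k m => ⟨closure (u k ∩ closedBall x₀ m), isClosed_closure⟩
  let K : ℕ → Set (Closeds X) := fun m => {t | (t : Set X) ⊆ closedBall x₀ m}
  have hK : ∀ m, IsCompact (K m) := fun m =>
    (Closeds.totallyBounded_subsets_of_totallyBounded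
      (isCompact_closedBall x₀ _).totallyBounded).isCompact_of_isClosed
      (Closeds.isClosed_subsets_of_isClosed isClosed_closedBall)
  have hC : ∀ k, C k ∈ univ.pi K := fun k m _ =>
    closure_minimal inter_subset_right isClosed_closedBall
  obtain ⟨L, -, φ, hφ, hL⟩ := (isCompact_univ_pi hK).tendsto_subseq hC
  refine ⟨fun m => L m, φ, hφ, fun m => (L m).isClosed, fun m => ?_⟩
  exact (tendsto_iff_edist_tendsto_0.1 (tendsto_pi_nhds.1 hL m)).congr fun k =>
    hausdorffEDist_closure_left

theorem inter_closedBall_subset_of_tendsto_hausdorffEDist {x₀ : X} {u : ℕ → Set X}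
    {L : ℕ → Set X} (hL : ∀ m, IsClosed (L m))
    (hu : ∀ m : ℕ, Tendsto (fun k => hausdorffEDist (u k ∩ closedBall x₀ m) (L m)) atTop (𝓝 0))
    {ρ : ℝ} {m : ℕ} (hρm : ρ < m) : (⋃ j, L j) ∩ closedBall x₀ ρ ⊆ L m := by
  rintro x ⟨hx, hxρ⟩
  obtain ⟨j, hxj⟩ := mem_iUnion.1 hx
  rw [← (hL m).closure_eq, Metric.mem_closure_iff]
  intro ε hε
  set η := min (ε / 2) (m - ρ)
  have hη : 0 < η := lt_min (half_pos hε) (sub_pos.2 hρm)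
  obtain ⟨k, ⟨-, hjk⟩, hmk, -⟩ :=
    ((eventually_subset_thickening_of_tendsto_hausdorffEDist (hu j) hη).and
      (eventually_subset_thickening_of_tendsto_hausdorffEDist (hu m) hη)).exists
  obtain ⟨p, ⟨hpu, -⟩, hxp⟩ := mem_thickening_iff.1 (hjk hxj)
  have hpm : p ∈ closedBall x₀ m := by
    rw [mem_closedBall] at hxρ ⊢
    linarith [dist_triangle_left p x₀ x, min_le_right (ε / 2) (m - ρ)]
  obtain ⟨y, hy, hpy⟩ := mem_thickening_iff.1 (hmk ⟨hpu, hpm⟩)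
  refine ⟨y, hy, ?_⟩
  linarith [dist_triangle x p y, min_le_left (ε / 2) (m - ρ)]

end HausdorffSelection

section LocalHausdorffDistance

variable {n : ℕ}

theorem mem_DSet_of_le {S S' : Set (EuclideanSpace ℝ (Fin n))} {a b : ℝ} (hb : b ∈ DSet S S')
    (hab : b ≤ a) : a ∈ DSet S S' := by
  obtain ⟨hb₀, h₁, h₂⟩ := hb
  have hball : closedBall (0 : EuclideanSpace ℝ (Fin n)) a⁻¹ ⊆ closedBall 0 b⁻¹ :=
    closedBall_subset_closedBall (inv_anti₀ hb₀ hab)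
  have hthick : ∀ T : Set (EuclideanSpace ℝ (Fin n)), T + closedBall 0 b ⊆ T + closedBall 0 a :=
    fun T => add_subset_add_left (closedBall_subset_closedBall hab)
  exact ⟨hb₀.trans_le hab, ((inter_subset_inter_right _ hball).trans h₁).trans (hthick _),
    ((inter_subset_inter_right _ hball).trans h₂).trans (hthick _)⟩

theorem mem_DSet_of_subset_thickening {S S' : Set (EuclideanSpace ℝ (Fin n))} {a : ℝ}
    (ha : 0 < a) (h₁ : S ∩ closedBall 0 a⁻¹ ⊆ thickening a S')
    (h₂ : S' ∩ closedBall 0 a⁻¹ ⊆ thickening a S) : a ∈ DSet S S' := by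
  have hthick : ∀ T : Set (EuclideanSpace ℝ (Fin n)), thickening a T ⊆ T + closedBall 0 a :=
    fun T => (add_ball_zero a T).symm.subset.trans (add_subset_add_left ball_subset_closedBall)
  exact ⟨ha, h₁.trans (hthick _), h₂.trans (hthick _)⟩

theorem dLF_nonneg (S S' : Set (EuclideanSpace ℝ (Fin n))) : 0 ≤ dLF S S' :=
  Real.sInf_nonneg fun a ha => by
    rcases ha with rfl | ha
    · positivity
    · exact ha.1.le

theorem dLF_le_of_mem_DSet {S S' : Set (EuclideanSpace ℝ (Fin n))} {a : ℝ}
    (ha : a ∈ DSet S S') : dLF S S' ≤ a :=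
  csInf_le ⟨0, fun b hb => by rcases hb with rfl | hb <;> [positivity; exact hb.1.le]⟩
    (mem_insert_of_mem _ ha)

theorem tendsto_dLF_nhds_zero_iff {ι : Type*} {l : Filter ι}
    {u : ι → Set (EuclideanSpace ℝ (Fin n))} {S : Set (EuclideanSpace ℝ (Fin n))} :
    Tendsto (fun k => dLF (u k) S) l (𝓝 0) ↔ ∀ a > 0, ∀ᶠ k in l, a ∈ DSet (u k) S := by
  constructor
  · intro h a ha
    have hmin : 0 < min a (Real.sqrt 2)⁻¹ := lt_min ha (by positivity)
    filter_upwards [h.eventually_lt_const hmin] with k hk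
    obtain ⟨b, hb, hbk⟩ := exists_lt_of_csInf_lt (insert_nonempty _ _) hk
    rcases hb with rfl | hb
    · exact absurd (hbk.trans_le (min_le_right _ _)) (lt_irrefl _)
    · exact mem_DSet_of_le hb (hbk.le.trans (min_le_left _ _))
  · intro h
    refine tendsto_order.2 ⟨fun a ha => Eventually.of_forall fun k => ha.trans_le (dLF_nonneg _ _),
      fun a ha => ?_⟩
    filter_upwards [h (a / 2) (half_pos ha)] with k hk
    exact (dLF_le_of_mem_DSet hk).trans_lt (half_lt_self ha)

theorem eventually_exists_dist_le_of_tendsto_dLF {ι : Type*} {l : Filter ι}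
    {u : ι → Set (EuclideanSpace ℝ (Fin n))} {S : Set (EuclideanSpace ℝ (Fin n))}
    (h : Tendsto (fun k => dLF (u k) S) l (𝓝 0)) {x : EuclideanSpace ℝ (Fin n)} (hx : x ∈ S)
    {ε : ℝ} (hε : 0 < ε) : ∀ᶠ k in l, ∃ p ∈ u k, dist p x ≤ ε := by
  set a := min ε (‖x‖ + 1)⁻¹
  have ha : 0 < a := lt_min hε (by positivity)
  have hxa : x ∈ closedBall 0 a⁻¹ := by
    rw [mem_closedBall_zero_iff]
    have : ‖x‖ + 1 ≤ a⁻¹ := le_inv_of_le_inv₀ ha (min_le_right _ _)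
    linarith
  filter_upwards [tendsto_dLF_nhds_zero_iff.1 h a ha] with k hk
  obtain ⟨p, hp, v, hv, hpv⟩ := hk.2.2 ⟨hx, hxa⟩
  refine ⟨p, hp, ?_⟩
  rw [← show p + v = x from hpv, dist_self_add_right]
  exact (mem_closedBall_zero_iff.1 hv).trans (min_le_left _ _)

theorem UniformlyDiscreteSet.of_tendsto_dLF {r : ℝ} {u : ℕ → Set (EuclideanSpace ℝ (Fin n))}
    {S : Set (EuclideanSpace ℝ (Fin n))} (hu : ∀ k, UniformlyDiscreteSet r (u k))
    (h : Tendsto (fun k => dLF (u k) S) atTop (𝓝 0)) : UniformlyDiscreteSet r S := by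
  intro x hx y hy hxy
  refine le_of_forall_pos_le_add fun δ hδ => ?_
  set ε := min (δ / 2) (dist x y / 3)
  have hε : 0 < ε := lt_min (half_pos hδ) (by linarith [dist_pos.2 hxy])
  obtain ⟨k, ⟨p, hp, hpx⟩, ⟨q, hq, hqy⟩⟩ :=
    ((eventually_exists_dist_le_of_tendsto_dLF h hx hε).and
      (eventually_exists_dist_le_of_tendsto_dLF h hy hε)).exists
  have hε₁ : ε ≤ δ / 2 := min_le_left _ _
  have hε₂ : ε ≤ dist x y / 3 := min_le_right _ _
  have hpq : p ≠ q := by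
    rintro rfl
    linarith [dist_triangle_left x y p]
  linarith [hu k p hp q hq hpq, dist_triangle4 p x y q, dist_comm q y]

theorem exists_subseq_tendsto_dLF (u : ℕ → Set (EuclideanSpace ℝ (Fin n))) :
    ∃ (S : Set (EuclideanSpace ℝ (Fin n))) (φ : ℕ → ℕ), StrictMono φ ∧
      Tendsto (fun k => dLF (u (φ k)) S) atTop (𝓝 0) := by
  obtain ⟨L, φ, hφ, hL, hconv⟩ := exists_subseq_tendsto_hausdorffEDist_inter_closedBall 0 u
  refine ⟨⋃ m, L m, φ, hφ, tendsto_dLF_nhds_zero_iff.2 fun a ha => ?_⟩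
  obtain ⟨m, hm⟩ := exists_nat_gt a⁻¹
  filter_upwards [eventually_subset_thickening_of_tendsto_hausdorffEDist (hconv m) ha]
    with k ⟨h₁, h₂⟩
  refine mem_DSet_of_subset_thickening ha ?_ ?_
  · exact (inter_subset_inter_right _ (closedBall_subset_closedBall hm.le)).trans
      (h₁.trans (thickening_subset_of_subset a (subset_iUnion L m)))
  · exact (inter_closedBall_subset_of_tendsto_hausdorffEDist hL hconv hm).trans
      (h₂.trans (thickening_subset_of_subset a inter_subset_left))

end LocalHausdorffDistance

theorem Ur_compact_general {n : ℕ} {r : ℝ}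
    (u : ℕ → Set (EuclideanSpace ℝ (Fin n)))
    (hu : ∀ k, UniformlyDiscreteSet r (u k)) :
    ∃ S : Set (EuclideanSpace ℝ (Fin n)), UniformlyDiscreteSet r S ∧
      ∃ φ : ℕ → ℕ, StrictMono φ ∧
        Tendsto (fun k => dLF (u (φ k)) S) atTop (nhds 0) := by
  obtain ⟨S, φ, hφ, hS⟩ := exists_subseq_tendsto_dLF u
  exact ⟨S, UniformlyDiscreteSet.of_tendsto_dLF (fun k => hu (φ k)) hS, φ, hφ, hS⟩

/-- `(U_r, d)` is compact: every sequence of uniformly discrete sets with parameter `r`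
admits a subsequence converging, for the metric `d`, to a uniformly discrete set with
parameter `r`. -/
theorem Ur_compact {n : ℕ} {r : ℝ} (hr : 0 < r)
    (u : ℕ → Set (EuclideanSpace ℝ (Fin n)))
    (hu : ∀ k, UniformlyDiscreteSet r (u k)) :
    ∃ S : Set (EuclideanSpace ℝ (Fin n)), UniformlyDiscreteSet r S ∧
      ∃ φ : ℕ → ℕ, StrictMono φ ∧
        Tendsto (fun k => dLF (u (φ k)) S) atTop (nhds 0) :=
  Ur_compact_general u hu
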